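/- arXiv:1403.3106 — 2 statements merged into one kernel-verified Lean document; each statement's English description precedes it below -/
import Mathlib

section
/- Let G be a separable metrisable topological group and A ⊆ G. Then A has property (OB) relative to G if and only if for every open neighbourhood V of the identity there are a finite subset F ⊆ G and some k ≥ 1 so that A ⊆ (FV)^k. -/
/-!
If `A ⊆ (F V)^k` and `V` is the unit ball of a compatible left-invariant metric `d`, then
`d 1 a ≤ k (1 + max_{f ∈ F} d 1 f)` on `A`, so `A` is bounded.

Conversely, fix `V`. The Birkhoff–Kakutani metric (the word metric of the dyadic gauge of a
basis `U n` of symmetric neighbourhoods of `1` with `U (n+1)³ ⊆ U n`) gives a compatible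
left-invariant metric `d` whose `r`-ball lies in `V`. Let `z` be dense and form a second word
metric `ℓ` in which an element of the `r`-ball costs its `d`-length and any other element `u`
costs at least `1` and more than the index of some translate `z n V` containing `u`. Near `1`,
`ℓ` agrees with `d`, so it is compatible. A word of cost `< N` is parsed greedily into blocks of
cheap letters of total cost `< r`, whose products lie in `V`, and expensive letters, each in
`z n V` with `n ≤ N`; there are at most `2N/r + 1` such factors. Hence if `A` is `ℓ`-bounded,
it lies in `(F V)^k` with `F = {1, z 0, …, z N}`.
-/

open Filter Topology
open scoped Pointwise

/-- A (plain) metric given as a distance function. -/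
def IsMetric {G : Type*} (d : G → G → ℝ) : Prop :=
  (∀ x y, d x y = 0 ↔ x = y) ∧ (∀ x y, d x y = d y x) ∧ ∀ x y z, d x z ≤ d x y + d y z

/-- The metric `d` induces the topology of `G`. -/
def IsCompatible (G : Type*) [TopologicalSpace G] (d : G → G → ℝ) : Prop :=
  ∀ (x : G) (s : Set G), s ∈ nhds x ↔ ∃ ε > (0 : ℝ), {y : G | d x y < ε} ⊆ s

/-- A compatible left-invariant metric on a topological group. -/
def IsCompatibleLeftInvariantMetric (G : Type*) [Group G] [TopologicalSpace G]
    (d : G → G → ℝ) : Prop :=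
  IsMetric d ∧ IsCompatible G d ∧ ∀ h g f : G, d (h * g) (h * f) = d g f

/-- A set has finite diameter with respect to `d`. -/
def FiniteDiam {G : Type*} (d : G → G → ℝ) (A : Set G) : Prop :=
  ∃ C : ℝ, ∀ x ∈ A, ∀ y ∈ A, d x y ≤ C

/-- `A` has property (OB) relative to `G`: finite diameter for every compatible
left-invariant metric. -/
def HasRelPropOB (G : Type*) [Group G] [TopologicalSpace G] (A : Set G) : Prop :=
  ∀ d : G → G → ℝ, IsCompatibleLeftInvariantMetric G d → FiniteDiam d A

/-- A sequence tends to infinity in `G` if some compatible left-invariant metric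
witnesses `d (g n) 1 → ∞`. -/
def TendsToInfinity (G : Type*) [Group G] [TopologicalSpace G] (g : ℕ → G) : Prop :=
  ∃ d : G → G → ℝ, IsCompatibleLeftInvariantMetric G d ∧
    Filter.Tendsto (fun n => d (g n) 1) Filter.atTop Filter.atTop

/-- A compatible left-invariant metric is metrically proper if `d (g n) 1 → ∞`
whenever `g n → ∞`. -/
def MetricallyProperMetric (G : Type*) [Group G] [TopologicalSpace G]
    (d : G → G → ℝ) : Prop :=
  ∀ g : ℕ → G, TendsToInfinity G g →
    Filter.Tendsto (fun n => d (g n) 1) Filter.atTop Filter.atTop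

open scoped NNReal

section Metric

variable {X : Type*} {d : X → X → ℝ}

theorem IsMetric.nonneg (hd : IsMetric d) (x y : X) : 0 ≤ d x y := by
  linarith [hd.2.2 x y x, hd.2.1 x y, (hd.1 x x).2 rfl]

theorem IsCompatible.hasBasis [TopologicalSpace X] (hd : IsCompatible X d) (x : X) :
    (𝓝 x).HasBasis (fun ε : ℝ => 0 < ε) fun ε => {y | d x y < ε} :=
  ⟨fun s => (hd x s).trans (by simp only [gt_iff_lt])⟩

theorem FiniteDiam.exists_dist_lt {A : Set X} (hA : FiniteDiam d A) (hd : IsMetric d) (x₀ : X) :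
    ∃ N : ℕ, ∀ a ∈ A, d x₀ a < N := by
  obtain ⟨C, hC⟩ := hA
  rcases A.eq_empty_or_nonempty with rfl | ⟨a₀, ha₀⟩
  · exact ⟨0, by simp⟩
  · obtain ⟨N, hN⟩ := exists_nat_gt (d x₀ a₀ + C)
    exact ⟨N, fun a ha => by linarith [hd.2.2 x₀ a₀ a, hC a₀ ha₀ a ha]⟩

end Metric

section LeftInvariantMetric

variable {G : Type*} [Group G] {d : G → G → ℝ}

theorem dist_eq_dist_one_inv_mul (hinv : ∀ h g f : G, d (h * g) (h * f) = d g f) (x y : G) :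
    d x y = d 1 (x⁻¹ * y) := by
  rw [← hinv x⁻¹ x y, inv_mul_cancel]

theorem IsMetric.dist_one_mul_le (hd : IsMetric d)
    (hinv : ∀ h g f : G, d (h * g) (h * f) = d g f) (g h : G) :
    d 1 (g * h) ≤ d 1 g + d 1 h := by
  have := hinv g 1 h
  rw [mul_one] at this
  linarith [hd.2.2 1 g (g * h)]

theorem le_mul_of_mem_pow {φ : G → ℝ} {T : Set G} {B : ℝ} (hφ1 : φ 1 ≤ 0)
    (hφmul : ∀ g h, φ (g * h) ≤ φ g + φ h) (hT : ∀ t ∈ T, φ t ≤ B) :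
    ∀ k : ℕ, ∀ x ∈ T ^ k, φ x ≤ k * B := by
  intro k
  induction k with
  | zero => simpa using hφ1
  | succ k ih =>
    rintro _ ⟨x, hx, t, ht, rfl⟩
    push_cast
    linarith [hφmul x t, ih x hx, hT t ht]

theorem finiteDiam_of_subset_pow [TopologicalSpace G] (hd : IsCompatibleLeftInvariantMetric G d)
    {A F : Set G} (hF : F.Finite) {k : ℕ} (hA : A ⊆ (F * {y | d 1 y < 1}) ^ k) :
    FiniteDiam d A := by
  obtain ⟨hdm, -, hdi⟩ := hd
  obtain ⟨M, hM⟩ := (hF.image (d 1)).bddAbove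
  have hT : ∀ t ∈ F * {y | d 1 y < 1}, d 1 t ≤ M + 1 := by
    rintro _ ⟨f, hf, v, hv, rfl⟩
    linarith [hdm.dist_one_mul_le hdi f v, hM (Set.mem_image_of_mem _ hf),
      Set.mem_ofPred_eq ▸ hv]
  have hpow := le_mul_of_mem_pow (by simp [(hdm.1 1 1).2 rfl]) (hdm.dist_one_mul_le hdi) hT k
  refine ⟨2 * (k * (M + 1)), fun x hx y hy => ?_⟩
  linarith [hdm.2.2 x 1 y, hdm.2.1 x 1, hpow x (hA hx), hpow y (hA hy)]

theorem isCompatibleLeftInvariantMetric_of_hasBasis [TopologicalSpace G] [IsTopologicalGroup G]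
    (hd : IsMetric d) (hinv : ∀ h g f : G, d (h * g) (h * f) = d g f)
    (hbasis : (𝓝 (1 : G)).HasBasis (fun ε : ℝ => 0 < ε) fun ε => {y | d 1 y < ε}) :
    IsCompatibleLeftInvariantMetric G d := by
  refine ⟨hd, fun x s => ?_, hinv⟩
  have hball (ε : ℝ) : {y | d x y < ε} = (x * ·) '' {y | d 1 y < ε} := by
    ext y
    rw [Set.image_mul_left, Set.mem_preimage, Set.mem_ofPred_eq, Set.mem_ofPred_eq,
      dist_eq_dist_one_inv_mul hinv]
  rw [← map_mul_left_nhds_one x, mem_map, hbasis.mem_iff]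
  simp only [hball, Set.image_subset_iff, gt_iff_lt]

end LeftInvariantMetric

section WordMetric

variable {G : Type*} [Group G]

/-- The chain infimum of `ofPreNNDist` is the infimum of `∑ c gᵢ` over all words
`g₁ ⋯ gₙ = x⁻¹ * y`. -/
noncomputable def wordDist (c : G → ℝ≥0) (h1 : c 1 = 0) (hinv : ∀ u, c u⁻¹ = c u) :
    G → G → ℝ :=
  (PseudoMetricSpace.ofPreNNDist (fun x y => c (x⁻¹ * y)) (by simpa using h1)
    (fun x y => by rw [← hinv, mul_inv_rev, inv_inv])).dist

variable {c : G → ℝ≥0} {h1 : c 1 = 0} {hinv : ∀ u, c u⁻¹ = c u}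

theorem isMetric_wordDist (hsep : ∀ x y, wordDist c h1 hinv x y = 0 → x = y) :
    IsMetric (wordDist c h1 hinv) :=
  letI := PseudoMetricSpace.ofPreNNDist (fun x y => c (x⁻¹ * y)) (by simpa using h1)
    (fun x y => by rw [← hinv, mul_inv_rev, inv_inv])
  ⟨fun x y => ⟨hsep x y, fun h => h ▸ dist_self x⟩, dist_comm, dist_triangle⟩

theorem wordDist_mul_left (g x y : G) :
    wordDist c h1 hinv (g * x) (g * y) = wordDist c h1 hinv x y := by
  simp only [wordDist, PseudoMetricSpace.dist_ofPreNNDist]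
  congr 1
  rw [← ((Equiv.mulLeft g).surjective.list_map).iInf_comp]
  congr 1 with l
  have hx : g * x :: l.map (g * ·) = (x :: l).map (g * ·) := rfl
  have hy : l.map (g * ·) ++ [g * y] = (l ++ [y]).map (g * ·) := by simp
  simp only [Equiv.coe_mulLeft]
  rw [hx, hy, List.zipWith_map]
  simp [mul_assoc]

theorem wordDist_le (x y : G) : wordDist c h1 hinv x y ≤ c (x⁻¹ * y) :=
  PseudoMetricSpace.dist_ofPreNNDist_le _ _ _ x y

theorem le_two_mul_wordDist
    (hc : ∀ a b b' : G, c (a * b * b') ≤ 2 * max (c a) (max (c b) (c b'))) (x y : G) :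
    (c (x⁻¹ * y) : ℝ) ≤ 2 * wordDist c h1 hinv x y := by
  refine PseudoMetricSpace.le_two_mul_dist_ofPreNNDist (fun x y => c (x⁻¹ * y)) _ _
    (fun x₁ x₂ x₃ x₄ => ?_) x y
  simpa only [mul_assoc, mul_inv_cancel_left] using hc (x₁⁻¹ * x₂) (x₂⁻¹ * x₃) (x₃⁻¹ * x₄)

theorem List.prod_zipWith_inv_mul (l : List G) (x y : G) :
    (List.zipWith (fun a b => a⁻¹ * b) (x :: l) (l ++ [y])).prod = x⁻¹ * y := by
  induction l generalizing x with
  | nil => simp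
  | cons w l ih => simp [ih, mul_assoc]

theorem exists_list_of_wordDist_lt {x y : G} {t : ℝ} (h : wordDist c h1 hinv x y < t) :
    ∃ L : List G, L.prod = x⁻¹ * y ∧ (L.map fun u => (c u : ℝ)).sum < t := by
  rw [wordDist, PseudoMetricSpace.dist_ofPreNNDist, NNReal.coe_iInf] at h
  obtain ⟨l, hl⟩ := exists_lt_of_ciInf_lt h
  refine ⟨_, List.prod_zipWith_inv_mul l x y, ?_⟩
  simpa [NNReal.coe_list_sum, List.map_zipWith] using hl

theorem le_wordDist {φ : G → ℝ} (hφ1 : φ 1 ≤ 0) (hφmul : ∀ g h, φ (g * h) ≤ φ g + φ h)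
    (hφc : ∀ u, φ u ≤ c u) (x y : G) : φ (x⁻¹ * y) ≤ wordDist c h1 hinv x y := by
  by_contra! hlt
  obtain ⟨L, hprod, hsum⟩ := exists_list_of_wordDist_lt hlt
  have hφL : ∀ L : List G, φ L.prod ≤ (L.map φ).sum := fun L => by
    induction L with
    | nil => simpa using hφ1
    | cons g L ih => simpa using (hφmul g L.prod).trans (by linarith)
  have : (L.map φ).sum ≤ (L.map fun u => (c u : ℝ)).sum :=
    List.sum_le_sum fun u _ => hφc u
  linarith [hprod ▸ hφL L]

theorem isCompatibleLeftInvariantMetric_wordDist [TopologicalSpace G] [IsTopologicalGroup G]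
    {d : G → G → ℝ} (hd : IsCompatibleLeftInvariantMetric G d) {r : ℝ} (hr : 0 < r)
    (hlow : ∀ u, min (d 1 u) r ≤ c u) (hup : ∀ u, d 1 u < r → (c u : ℝ) ≤ d 1 u) :
    IsCompatibleLeftInvariantMetric G (wordDist c h1 hinv) := by
  obtain ⟨hdm, hdc, hdi⟩ := hd
  have hmin (x y : G) : min (d x y) r ≤ wordDist c h1 hinv x y := by
    rw [dist_eq_dist_one_inv_mul hdi]
    refine le_wordDist (φ := fun u => min (d 1 u) r) (by simp [(hdm.1 1 1).2 rfl, hr.le])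
      (fun g h => ?_) hlow x y
    have := hdm.dist_one_mul_le hdi g h
    have := hdm.nonneg 1 g
    have := hdm.nonneg 1 h
    simp only [min_def]
    split_ifs <;> linarith
  refine isCompatibleLeftInvariantMetric_of_hasBasis (isMetric_wordDist fun x y hxy => ?_)
    wordDist_mul_left ((hdc.hasBasis 1).to_hasBasis (fun ε hε => ⟨min ε r, lt_min hε hr,
      fun y hy => ?_⟩) fun ε hε => ⟨min ε r, lt_min hε hr, fun y hy => ?_⟩)
  · refine (hdm.1 x y).1 (le_antisymm ?_ (hdm.nonneg x y))
    have := hmin x y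
    rw [hxy, min_le_iff] at this
    exact this.resolve_right hr.not_ge
  · have hle := hmin 1 y
    simp only [Set.mem_ofPred_eq, lt_min_iff] at hy ⊢
    have hlt : d 1 y < r := (min_lt_iff.1 (hle.trans_lt hy.2)).resolve_right (lt_irrefl r)
    rw [min_eq_left hlt.le] at hle
    linarith
  · simp only [Set.mem_ofPred_eq, lt_min_iff] at hy ⊢
    have := wordDist_le (h1 := h1) (hinv := hinv) 1 y
    rw [inv_one, one_mul] at this
    linarith [hup y hy.2]

end WordMetric

section DyadicGauge

variable {X : Type*} {U : ℕ → Set X}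

open Classical in
noncomputable def dyadicGauge (U : ℕ → Set X) (u : X) : ℝ≥0 :=
  if h : ∃ n, u ∉ U n then (1 / 2) ^ Nat.find h else 0

theorem dyadicGauge_le {u : X} {t : ℝ} (ht : 0 ≤ t) (h : ∀ n, t < (1 / 2) ^ n → u ∈ U n) :
    (dyadicGauge U u : ℝ) ≤ t := by
  classical
  unfold dyadicGauge
  split_ifs with hu
  · push_cast
    exact not_lt.1 fun htn => Nat.find_spec hu (h _ htn)
  · exact ht

theorem dyadicGauge_lt_iff (hU : Antitone U) {u : X} {n : ℕ} :
    (dyadicGauge U u : ℝ) < (1 / 2) ^ n ↔ u ∈ U n := by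
  classical
  unfold dyadicGauge
  split_ifs with hu
  · push_cast
    rw [pow_lt_pow_iff_right_of_lt_one₀ (by norm_num) (by norm_num), Nat.lt_find_iff]
    simp only [not_not]
    exact ⟨fun h => h n le_rfl, fun h m hm => hU hm h⟩
  · simp only [not_exists, not_not] at hu
    simp [hu n]

end DyadicGauge

section BirkhoffKakutani

variable {G : Type*} [Group G] {U : ℕ → Set G}

theorem dyadicGauge_one (hU : ∀ n, (1 : G) ∈ U n) : dyadicGauge U (1 : G) = 0 :=
  NNReal.coe_eq_zero.1 <|
    le_antisymm (dyadicGauge_le le_rfl fun n _ => hU n) (dyadicGauge U 1).coe_nonneg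

theorem dyadicGauge_inv (hU : Antitone U) (hsymm : ∀ n, (U n)⁻¹ = U n) (u : G) :
    dyadicGauge U u⁻¹ = dyadicGauge U u := by
  have key (v : G) : (dyadicGauge U v⁻¹ : ℝ) ≤ dyadicGauge U v :=
    dyadicGauge_le (by positivity) fun n hn => by
      rw [← hsymm n]
      exact Set.inv_mem_inv.2 ((dyadicGauge_lt_iff hU).1 hn)
  exact NNReal.coe_injective (le_antisymm (key u) (by simpa using key u⁻¹))

theorem dyadicGauge_mul_mul_le (hU : Antitone U)
    (hcube : ∀ n, U (n + 1) * U (n + 1) * U (n + 1) ⊆ U n) (a b b' : G) :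
    dyadicGauge U (a * b * b') ≤
      2 * max (dyadicGauge U a) (max (dyadicGauge U b) (dyadicGauge U b')) := by
  rw [← NNReal.coe_le_coe]
  push_cast
  refine dyadicGauge_le (by positivity) fun n hn => hcube n ?_
  have hsmall {v : G} (hv : (dyadicGauge U v : ℝ) ≤
      max (dyadicGauge U a : ℝ) (max (dyadicGauge U b : ℝ) (dyadicGauge U b' : ℝ))) :
      v ∈ U (n + 1) :=
    (dyadicGauge_lt_iff hU).1 (by rw [pow_succ]; linarith)
  exact Set.mul_mem_mul (Set.mul_mem_mul (hsmall (le_max_left _ _))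
    (hsmall ((le_max_left _ _).trans (le_max_right _ _))))
    (hsmall ((le_max_right _ _).trans (le_max_right _ _)))

theorem IsTopologicalGroup.exists_antitone_basis_nhds_one_inv_eq_mul_mul_subset
    [TopologicalSpace G] [IsTopologicalGroup G] [FirstCountableTopology G] :
    ∃ U : ℕ → Set G, (𝓝 (1 : G)).HasAntitoneBasis U ∧ (∀ n, (U n)⁻¹ = U n) ∧
      ∀ n, U (n + 1) * U (n + 1) * U (n + 1) ⊆ U n := by
  obtain ⟨u, hu, hmul⟩ := IsTopologicalGroup.exists_antitone_basis_nhds_one G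
  have hcube {n : ℕ} {a b c : G} (ha : a ∈ u (2 * n + 2)) (hb : b ∈ u (2 * n + 2))
      (hc : c ∈ u (2 * n + 2)) : a * b * c ∈ u (2 * n) :=
    hmul (2 * n) (Set.mul_mem_mul (hmul (2 * n + 1) (Set.mul_mem_mul ha hb))
      (hu.antitone (by omega) hc))
  refine ⟨fun n => u (2 * n) ∩ (u (2 * n))⁻¹, ⟨?_, fun m n h => ?_⟩, fun n => ?_, fun n => ?_⟩
  · refine hu.1.to_hasBasis (fun n _ => ⟨n, trivial, ?_⟩) fun n _ =>
      hu.1.mem_iff.1 (inter_mem (hu.mem _) (inv_mem_nhds_one G (hu.mem _)))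
    exact Set.inter_subset_left.trans (hu.antitone (by omega))
  · exact Set.inter_subset_inter (hu.antitone (by omega))
      (Set.inv_subset_inv.2 (hu.antitone (by omega)))
  · simp [Set.inter_comm]
  · rintro _ ⟨_, ⟨a, ha, b, hb, rfl⟩, c, hc, rfl⟩
    refine ⟨hcube ha.1 hb.1 hc.1, ?_⟩
    simpa [mul_assoc] using hcube hc.2 hb.2 ha.2

theorem exists_isCompatibleLeftInvariantMetric [TopologicalSpace G] [IsTopologicalGroup G]
    [FirstCountableTopology G] [T1Space G] :
    ∃ d : G → G → ℝ, IsCompatibleLeftInvariantMetric G d := by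
  obtain ⟨U, hU, hsymm, hcube⟩ :=
    IsTopologicalGroup.exists_antitone_basis_nhds_one_inv_eq_mul_mul_subset (G := G)
  set d := wordDist (dyadicGauge U) (dyadicGauge_one fun n => mem_of_mem_nhds (hU.mem n))
    (dyadicGauge_inv hU.antitone hsymm)
  have hupper (y : G) : d 1 y ≤ dyadicGauge U y := by simpa using wordDist_le 1 y
  have hlower (x y : G) : (dyadicGauge U (x⁻¹ * y) : ℝ) ≤ 2 * d x y :=
    le_two_mul_wordDist (dyadicGauge_mul_mul_le hU.antitone hcube) x y
  have hsep (x y : G) (hxy : d x y = 0) : x = y := by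
    have hmem (n : ℕ) : x⁻¹ * y ∈ U n := (dyadicGauge_lt_iff hU.antitone).1 <| by
      linarith [hlower x y, pow_pos (one_half_pos (α := ℝ)) n]
    refine inv_mul_eq_one.1 (by_contra fun hne => ?_)
    obtain ⟨n, -, hn⟩ := hU.1.mem_iff.1 (compl_singleton_mem_nhds (Ne.symm hne))
    exact hn (hmem n) rfl
  have hbasis : (𝓝 (1 : G)).HasBasis (fun ε : ℝ => 0 < ε) fun ε => {y | d 1 y < ε} := by
    refine hU.1.to_hasBasis (fun n _ => ⟨(1 / 2) ^ (n + 1), by positivity, fun y hy => ?_⟩)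
      fun ε hε => ?_
    · have := hlower 1 y
      rw [inv_one, one_mul] at this
      rw [Set.mem_ofPred_eq, pow_succ] at hy
      exact (dyadicGauge_lt_iff hU.antitone).1 (by linarith)
    · obtain ⟨n, hn⟩ := exists_pow_lt_of_lt_one hε (by norm_num : (1 / 2 : ℝ) < 1)
      exact ⟨n, trivial, fun y hy =>
        (hupper y).trans_lt (((dyadicGauge_lt_iff hU.antitone).2 hy).trans hn)⟩
  exact ⟨d, isCompatibleLeftInvariantMetric_of_hasBasis (isMetric_wordDist hsep)
    wordDist_mul_left hbasis⟩

end BirkhoffKakutani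

section Accounting

variable {G : Type*} [Group G] {φ : G → ℝ} {c : G → ℝ≥0} {T : Set G} {r : ℝ}

/-- Greedy parsing of a word from the right: `p` is the pending block of cheap letters, of total
cost `s < r`, and `q` is already a product of `j` factors from `T`. A flush adds two factors and
spends cost at least `r`. -/
theorem List.exists_prod_eq_mul_mem_pow (hr : 0 < r) (hφ1 : φ 1 ≤ 0)
    (hφmul : ∀ g h, φ (g * h) ≤ φ g + φ h) (hT : ∀ g, φ g < r → g ∈ T)
    (hsmall : ∀ g, (c g : ℝ) < r → φ g ≤ c g) (L : List G) (hL : ∀ g ∈ L, r ≤ c g → g ∈ T) :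
    ∃ p q : G, ∃ s : ℝ, ∃ j : ℕ, L.prod = p * q ∧ 0 ≤ s ∧ φ p ≤ s ∧ s < r ∧ q ∈ T ^ j ∧
      j * r ≤ 2 * ((L.map fun g => (c g : ℝ)).sum - s) := by
  induction L with
  | nil => exact ⟨1, 1, 0, 0, by simp, le_rfl, hφ1, hr, by simp, by simp⟩
  | cons g L ih =>
    obtain ⟨p, q, s, j, hprod, hs0, hφp, hsr, hq, hj⟩ :=
      ih fun h hh => hL h (List.mem_cons_of_mem _ hh)
    simp only [List.prod_cons, List.map_cons, List.sum_cons]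
    have hflush (hg : g ∈ T) (hcost : r ≤ s + c g) : ∃ p' q' : G, ∃ s' : ℝ, ∃ j' : ℕ,
        g * L.prod = p' * q' ∧ 0 ≤ s' ∧ φ p' ≤ s' ∧ s' < r ∧ q' ∈ T ^ j' ∧
          j' * r ≤ 2 * ((c g + (L.map fun g => (c g : ℝ)).sum) - s') := by
      refine ⟨1, g * (p * q), 0, j + 2, by rw [hprod, one_mul], le_rfl, hφ1, hr, ?_, ?_⟩
      · rw [pow_succ', pow_succ']
        exact Set.mul_mem_mul hg (Set.mul_mem_mul (hT p (hφp.trans_lt hsr)) hq)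
      · push_cast
        linarith
    by_cases hcg : (c g : ℝ) < r
    · by_cases hcost : s + c g < r
      · refine ⟨g * p, q, s + c g, j, by rw [hprod, mul_assoc], by positivity,
          (hφmul g p).trans (by linarith [hsmall g hcg]), hcost, hq, by linarith⟩
      · exact hflush (hT g ((hsmall g hcg).trans_lt hcg)) (not_lt.1 hcost)
    · exact hflush (hL g List.mem_cons_self (not_lt.1 hcg)) (by linarith)

theorem List.prod_mem_pow_of_sum_le (hr : 0 < r) (hφ1 : φ 1 ≤ 0)
    (hφmul : ∀ g h, φ (g * h) ≤ φ g + φ h) (hT1 : (1 : G) ∈ T) (hT : ∀ g, φ g < r → g ∈ T)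
    (hsmall : ∀ g, (c g : ℝ) < r → φ g ≤ c g) {B : ℝ} (hbig : ∀ g, r ≤ c g → c g ≤ B → g ∈ T)
    {L : List G} (hL : (L.map fun g => (c g : ℝ)).sum ≤ B) :
    L.prod ∈ T ^ (⌊2 * B / r⌋₊ + 1) := by
  have hletter : ∀ g ∈ L, r ≤ c g → g ∈ T := fun g hg hrg => hbig g hrg <|
    (List.single_le_sum (List.forall_mem_map.2 fun g _ => (c g).coe_nonneg) _
      (List.mem_map_of_mem hg)).trans hL
  obtain ⟨p, q, s, j, hprod, hs0, hφp, hsr, hq, hj⟩ :=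
    L.exists_prod_eq_mul_mem_pow hr hφ1 hφmul hT hsmall hletter
  have hjB : j ≤ ⌊2 * B / r⌋₊ := Nat.le_floor <| (le_div_iff₀ hr).2 (by linarith)
  refine Set.pow_subset_pow_right hT1 (by omega : 1 + j ≤ _) ?_
  rw [hprod, pow_add, pow_one]
  exact Set.mul_mem_mul (hT p (hφp.trans_lt hsr)) hq

end Accounting

section EscapeCost

variable {G : Type*} [Group G] {d : G → G → ℝ} {r : ℝ} {z : ℕ → G} {V : Set G}

/-- Off the `r`-ball the cost exceeds the least `n` with `u ∈ z n * V` (`sInf ∅ = 0` here, which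
density of `z` rules out); the `u⁻¹` term makes the cost symmetric. -/
noncomputable def escapeCost (d : G → G → ℝ) (r : ℝ) (z : ℕ → G) (V : Set G) (u : G) : ℝ≥0 :=
  if d 1 u < r then (d 1 u).toNNReal
  else (sInf {n | (z n)⁻¹ * u ∈ V} + sInf {n | (z n)⁻¹ * u⁻¹ ∈ V} + 1 : ℕ)

theorem escapeCost_one (hd : IsMetric d) (hr : 0 < r) : escapeCost d r z V 1 = 0 := by
  simp [escapeCost, (hd.1 1 1).2 rfl, hr]

theorem escapeCost_inv (hd : IsMetric d) (hinv : ∀ h g f : G, d (h * g) (h * f) = d g f)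
    (u : G) : escapeCost d r z V u⁻¹ = escapeCost d r z V u := by
  have : d 1 u⁻¹ = d 1 u := by
    rw [dist_eq_dist_one_inv_mul hinv, ← hd.2.1, dist_eq_dist_one_inv_mul hinv]
    simp
  simp only [escapeCost, this, inv_inv, add_comm (sInf {n | (z n)⁻¹ * u ∈ V})]

theorem min_le_escapeCost (hd : IsMetric d) (hr : r ≤ 1) (u : G) :
    min (d 1 u) r ≤ escapeCost d r z V u := by
  unfold escapeCost
  split_ifs
  · rw [Real.coe_toNNReal _ (hd.nonneg 1 u)]
    exact min_le_left _ _
  · push_cast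
    exact (min_le_right _ _).trans (hr.trans (le_add_of_nonneg_left (by positivity)))

theorem escapeCost_le_of_lt (hd : IsMetric d) {u : G} (h : d 1 u < r) :
    (escapeCost d r z V u : ℝ) ≤ d 1 u := by
  simp [escapeCost, h, hd.nonneg]

theorem dist_one_le_escapeCost_of_lt (hd : IsMetric d) (hr : r ≤ 1) {u : G}
    (h : (escapeCost d r z V u : ℝ) < r) : d 1 u ≤ escapeCost d r z V u := by
  by_contra! h'
  rcases min_le_iff.1 (min_le_escapeCost (z := z) (V := V) hd hr u) with h'' | h'' <;> linarith

theorem mem_mul_of_escapeCost_le (hball : ∀ u, d 1 u < r → u ∈ V)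
    (hz : ∀ u, ∃ n, (z n)⁻¹ * u ∈ V) {N : ℕ} {u : G} (h : (escapeCost d r z V u : ℝ) ≤ N) :
    u ∈ insert 1 (z '' Set.Iic N) * V := by
  by_cases hu : d 1 u < r
  · exact ⟨1, Set.mem_insert _ _, u, hball u hu, one_mul u⟩
  · rw [escapeCost, if_neg hu] at h
    set n := sInf {n | (z n)⁻¹ * u ∈ V}
    have : n + sInf {n | (z n)⁻¹ * u⁻¹ ∈ V} + 1 ≤ N := by exact_mod_cast h
    exact ⟨z n, Set.mem_insert_of_mem _ ⟨n, Set.mem_Iic.2 (by omega), rfl⟩, _,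
      Nat.sInf_mem (hz u), mul_inv_cancel_left _ _⟩

end EscapeCost

section RelativeOB

variable {G : Type*} [Group G] [TopologicalSpace G] [IsTopologicalGroup G]

theorem exists_isCompatibleLeftInvariantMetric_ball_subset_pow
    [TopologicalSpace.MetrizableSpace G] [TopologicalSpace.SeparableSpace G]
    {V : Set G} (hV : IsOpen V) (hV1 : (1 : G) ∈ V) :
    ∃ d : G → G → ℝ, IsCompatibleLeftInvariantMetric G d ∧
      ∀ N : ℕ, ∃ F : Set G, F.Finite ∧ ∃ k : ℕ, 1 ≤ k ∧ {a | d 1 a < N} ⊆ (F * V) ^ k := by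
  obtain ⟨d, hd⟩ := exists_isCompatibleLeftInvariantMetric (G := G)
  obtain ⟨r₀, hr₀, hball⟩ := (hd.2.1 1 V).1 (hV.mem_nhds hV1)
  set r := min r₀ 1
  have hr : 0 < r := lt_min hr₀ one_pos
  have hballr (u : G) (hu : d 1 u < r) : u ∈ V := hball (hu.trans_le (min_le_left _ _))
  have : Nonempty G := ⟨1⟩
  set z := TopologicalSpace.denseSeq G
  have hz (u : G) : ∃ n, (z n)⁻¹ * u ∈ V :=
    (TopologicalSpace.denseRange_denseSeq G).exists_mem_open
      (hV.preimage (by fun_prop : Continuous fun g : G => g⁻¹ * u)) ⟨u, by simpa⟩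
  let c := escapeCost d r z V
  refine ⟨wordDist c (escapeCost_one hd.1 hr) (escapeCost_inv hd.1 hd.2.2),
    isCompatibleLeftInvariantMetric_wordDist hd hr (min_le_escapeCost hd.1 (min_le_right _ _))
      fun u => escapeCost_le_of_lt hd.1,
    fun N => ⟨insert 1 (z '' Set.Iic N), ((Set.finite_Iic N).image z).insert 1,
      ⌊2 * N / r⌋₊ + 1, Nat.le_add_left 1 _, fun a ha => ?_⟩⟩
  obtain ⟨L, hprod, hsum⟩ := exists_list_of_wordDist_lt ha
  rw [inv_one, one_mul] at hprod
  rw [← hprod]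
  exact List.prod_mem_pow_of_sum_le (T := insert 1 (z '' Set.Iic N) * V) hr
    ((hd.1.1 1 1).2 rfl).le (hd.1.dist_one_mul_le hd.2.2)
    ⟨1, Set.mem_insert _ _, 1, hV1, one_mul 1⟩
    (fun g hg => ⟨1, Set.mem_insert _ _, g, hballr g hg, one_mul g⟩)
    (fun g => dist_one_le_escapeCost_of_lt hd.1 (min_le_right _ _))
    (fun g _ hg => mem_mul_of_escapeCost_le hballr hz hg) hsum.le

end RelativeOB

theorem relOB_iff_covered_by_FV_pow {G : Type*} [Group G]
    [TopologicalSpace G] [IsTopologicalGroup G] [TopologicalSpace.MetrizableSpace G]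
    [TopologicalSpace.SeparableSpace G] (A : Set G) :
    HasRelPropOB G A ↔
      ∀ V : Set G, IsOpen V → (1 : G) ∈ V →
        ∃ F : Set G, F.Finite ∧ ∃ k : ℕ, 1 ≤ k ∧ A ⊆ (F * V) ^ k := by
  constructor
  · intro hOB V hV hV1
    obtain ⟨d, hd, hcover⟩ := exists_isCompatibleLeftInvariantMetric_ball_subset_pow hV hV1
    obtain ⟨N, hN⟩ := (hOB d hd).exists_dist_lt hd.1 1
    obtain ⟨F, hF, k, hk, hsub⟩ := hcover N
    exact ⟨F, hF, k, hk, fun a ha => hsub (hN a ha)⟩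
  · intro h d hd
    have hB : {y | d 1 y < 1} ∈ 𝓝 (1 : G) := (hd.2.1 1 _).2 ⟨1, one_pos, subset_rfl⟩
    obtain ⟨F, hF, k, -, hA⟩ := h _ isOpen_interior (mem_interior_iff_mem_nhds.2 hB)
    exact finiteDiam_of_subset_pow hd hF
      (hA.trans (Set.pow_subset_pow_left (Set.mul_subset_mul_left interior_subset)))
end

section
/- A separable metrisable topological group G admits a metrically proper two-sided invariant compatible metric if and only if the following three conditions hold: G is a SIN group (it has a neighbourhood basis at the identity consisting of conjugation-invariant sets); G has the local property (OB); and whenever a subset A ⊆ G has property (OB) relative to G, so does its conjugation closure A^G = {gag⁻¹ : a ∈ A, g ∈ G}. -/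
open Filter Topology
open scoped Pointwise

/-- The closure of a set under conjugation: `A^G = {g a g⁻¹ : a ∈ A, g ∈ G}`. -/
def ConjClosure {G : Type*} [Group G] (A : Set G) : Set G :=
  {x : G | ∃ a ∈ A, ∃ g : G, x = g * a * g⁻¹}


/-!
For the forward direction, bi-invariance makes the metric balls conjugation invariant, and
metric properness makes every metrically bounded set, such as the unit ball or the conjugation
closure of an (OB) set, satisfy (OB).

For the converse we build a two-sided sequence `S n`, `n ∈ ℤ`, of symmetric conjugation-invariant
sets with `S n * S n * S n ⊆ S (n + 1)`: for `n ≤ 0` a neighbourhood basis of `1` inside an (OB)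
neighbourhood (this is where SIN is used), for `n ≥ 0` (OB) sets exhausting `G`, obtained from a
dense sequence by repeatedly taking cubes and adding conjugation closures. The Birkhoff–Kakutani
chain construction applied to the gauge `g ↦ inf {2 ^ n | g ∈ S n}` gives a bi-invariant metric
within a factor `2` of the gauge. The small sets make it compatible; the large sets, being (OB),
make it metrically proper.
-/

open scoped NNReal

namespace IsCompatibleLeftInvariantMetric

variable {G : Type*} [Group G] [TopologicalSpace G] {d : G → G → ℝ}
  (hd : IsCompatibleLeftInvariantMetric G d)
include hd

theorem dist_comm (x y : G) : d x y = d y x := hd.1.2.1 x y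

theorem dist_triangle (x y z : G) : d x z ≤ d x y + d y z := hd.1.2.2 x y z

theorem dist_mul_one_le (x y : G) : d (x * y) 1 ≤ d x 1 + d y 1 := by
  have h := hd.2.2 x y 1
  rw [mul_one] at h
  linarith [hd.dist_triangle (x * y) x 1]

theorem finiteDiam_iff {A : Set G} : FiniteDiam d A ↔ ∃ C, ∀ a ∈ A, d a 1 ≤ C := by
  constructor
  · rintro ⟨C, hC⟩
    rcases A.eq_empty_or_nonempty with rfl | ⟨a₀, ha₀⟩
    · exact ⟨0, by simp⟩
    exact ⟨C + d a₀ 1, fun a ha => by linarith [hd.dist_triangle a a₀ 1, hC a ha a₀ ha₀]⟩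
  · rintro ⟨C, hC⟩
    refine ⟨2 * C, fun x hx y hy => ?_⟩
    linarith [hd.dist_triangle x 1 y, hd.dist_comm 1 y, hC x hx, hC y hy]

end IsCompatibleLeftInvariantMetric

theorem isCompatible_of_hasBasis {G : Type*} [Group G] [TopologicalSpace G]
    [IsTopologicalGroup G] {d : G → G → ℝ} (hleft : ∀ h g f : G, d (h * g) (h * f) = d g f)
    (hB : (𝓝 (1 : G)).HasBasis (fun ε : ℝ => 0 < ε) fun ε => {g | d 1 g < ε}) :
    IsCompatible G d := by
  intro x s
  have hx : ∀ g, d x (x * g) = d 1 g := fun g => by simpa using hleft x 1 g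
  rw [← map_mul_left_nhds_one x, Filter.mem_map, hB.mem_iff]
  refine exists_congr fun ε => and_congr_right fun _ =>
    ⟨fun h y hy => ?_, fun h g hg => h (show d x (x * g) < ε by rwa [hx])⟩
  simpa using h (show d 1 (x⁻¹ * y) < ε by rwa [← hx, mul_inv_cancel_left])

theorem hasRelPropOB_iff {G : Type*} [Group G] [TopologicalSpace G] {A : Set G} :
    HasRelPropOB G A ↔ ∀ d, IsCompatibleLeftInvariantMetric G d → ∃ C, ∀ a ∈ A, d a 1 ≤ C :=
  forall₂_congr fun _ hd => hd.finiteDiam_iff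

namespace HasRelPropOB

variable {G : Type*} [Group G] [TopologicalSpace G] {A B : Set G}

theorem mono (hB : HasRelPropOB G B) (hAB : A ⊆ B) : HasRelPropOB G A := fun d hd =>
  let ⟨C, hC⟩ := hB d hd
  ⟨C, fun x hx y hy => hC x (hAB hx) y (hAB hy)⟩

theorem union (hA : HasRelPropOB G A) (hB : HasRelPropOB G B) : HasRelPropOB G (A ∪ B) := by
  rw [hasRelPropOB_iff] at *
  intro d hd
  obtain ⟨C, hC⟩ := hA d hd
  obtain ⟨C', hC'⟩ := hB d hd
  exact ⟨max C C', fun a ha => ha.elim (fun h => le_max_of_le_left (hC a h))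
    (fun h => le_max_of_le_right (hC' a h))⟩

theorem mul (hA : HasRelPropOB G A) (hB : HasRelPropOB G B) : HasRelPropOB G (A * B) := by
  rw [hasRelPropOB_iff] at *
  intro d hd
  obtain ⟨C, hC⟩ := hA d hd
  obtain ⟨C', hC'⟩ := hB d hd
  refine ⟨C + C', ?_⟩
  rintro _ ⟨a, ha, b, hb, rfl⟩
  linarith [hd.dist_mul_one_le a b, hC a ha, hC' b hb]

end HasRelPropOB

theorem Set.Finite.hasRelPropOB {G : Type*} [Group G] [TopologicalSpace G] {A : Set G}
    (hA : A.Finite) : HasRelPropOB G A := fun d _ =>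
  let ⟨C, hC⟩ := ((hA.prod hA).image fun p => d p.1 p.2).bddAbove
  ⟨C, fun x hx y hy => hC ⟨(x, y), ⟨hx, hy⟩, rfl⟩⟩

theorem MetricallyProperMetric.hasRelPropOB {G : Type*} [Group G] [TopologicalSpace G]
    {d : G → G → ℝ} (hp : MetricallyProperMetric G d) {A : Set G} {C : ℝ}
    (hA : ∀ a ∈ A, d a 1 ≤ C) : HasRelPropOB G A := by
  rw [hasRelPropOB_iff]
  intro ρ hρ
  by_contra! h
  choose g hgA hg using fun n : ℕ => h n
  have hg_inf : TendsToInfinity G g :=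
    ⟨ρ, hρ, tendsto_atTop_mono (fun n => (hg n).le) tendsto_natCast_atTop_atTop⟩
  obtain ⟨n, hn⟩ := ((hp g hg_inf).eventually_gt_atTop C).exists
  exact (hA _ (hgA n)).not_gt hn

namespace IsCompatibleLeftInvariantMetric

variable {G : Type*} [Group G] [TopologicalSpace G] {d : G → G → ℝ}
  (hd : IsCompatibleLeftInvariantMetric G d) (hright : ∀ h g f : G, d (g * h) (f * h) = d g f)
include hd hright

theorem dist_conj_one (g a : G) : d (g * a * g⁻¹) 1 = d a 1 := by
  rw [← hright g, one_mul, inv_mul_cancel_right]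
  simpa using hd.2.2 g a 1

theorem exists_conj_invariant_nhds_subset {U : Set G} (hU : U ∈ 𝓝 (1 : G)) :
    ∃ V ∈ 𝓝 (1 : G), V ⊆ U ∧ ∀ g : G, ∀ a ∈ V, g * a * g⁻¹ ∈ V := by
  obtain ⟨ε, hε, hball⟩ := (hd.2.1 1 U).1 hU
  refine ⟨{y | d 1 y < ε}, (hd.2.1 1 _).2 ⟨ε, hε, subset_rfl⟩, hball, fun g a ha => ?_⟩
  simpa [hd.dist_comm 1, hd.dist_conj_one hright] using ha

theorem hasRelPropOB_conjClosure (hp : MetricallyProperMetric G d) {A : Set G}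
    (hA : HasRelPropOB G A) : HasRelPropOB G (ConjClosure A) := by
  obtain ⟨C, hC⟩ := hasRelPropOB_iff.1 hA d hd
  refine hp.hasRelPropOB (C := C) ?_
  rintro _ ⟨a, ha, g, rfl⟩
  rw [hd.dist_conj_one hright]
  exact hC a ha

end IsCompatibleLeftInvariantMetric

theorem PseudoMetricSpace.dist_ofPreNNDist_equiv {X : Type*} (d : X → X → ℝ≥0)
    (dist_self : ∀ x, d x x = 0) (dist_comm : ∀ x y, d x y = d y x) (e : X ≃ X)
    (he : ∀ x y, d (e x) (e y) = d x y) (x y : X) :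
    @dist X (ofPreNNDist d dist_self dist_comm).toDist (e x) (e y) =
      @dist X (ofPreNNDist d dist_self dist_comm).toDist x y := by
  simp only [dist_ofPreNNDist]
  congr 1
  refine ((List.map_surjective_iff.2 e.surjective).iInf_congr _ fun l => ?_).symm
  rw [← List.map_cons, show [e y] = [y].map e from rfl, ← List.map_append, List.zipWith_map]
  simp only [he]

section NormalScale

variable {G : Type*}

structure IsNormalSymmetric [Group G] (s : Set G) : Prop where
  inv_mem : ∀ x ∈ s, x⁻¹ ∈ s
  conj_mem : ∀ g x, x ∈ s → g * x * g⁻¹ ∈ s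

structure IsNormalScale [Group G] (S : ℤ → Set G) : Prop where
  one_mem : ∀ n, (1 : G) ∈ S n
  isNormalSymmetric : ∀ n, IsNormalSymmetric (S n)
  mul_mul_subset : ∀ n, S n * S n * S n ⊆ S (n + 1)
  exists_mem : ∀ g, ∃ n, g ∈ S n

/-- Since `sInf ∅ = 0` in `ℝ≥0`, this is only meaningful when `∃ n, g ∈ S n`. -/
noncomputable def scaleNorm (S : ℤ → Set G) (g : G) : ℝ≥0 :=
  sInf ((fun n : ℤ => (2 : ℝ≥0) ^ n) '' {n | g ∈ S n})

variable {S : ℤ → Set G} {g : G} {n : ℤ}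

theorem scaleNorm_le (h : g ∈ S n) : scaleNorm S g ≤ 2 ^ n :=
  csInf_le (OrderBot.bddBelow _) ⟨n, h, rfl⟩

theorem scaleNorm_le_two_mul {c : ℝ≥0} (h : ∀ n : ℤ, c < 2 ^ n → g ∈ S n) :
    scaleNorm S g ≤ 2 * c := by
  refine le_of_forall_gt_imp_ge_of_dense fun t ht => ?_
  obtain ⟨n, hn, hn'⟩ := NNReal.exists_mem_Ico_zpow (pos_of_gt ht).ne' one_lt_two
  have hc : c < 2 ^ n := by
    rw [zpow_add_one₀ two_ne_zero, mul_comm] at hn'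
    exact lt_of_mul_lt_mul_left (ht.trans hn') zero_le
  exact (scaleNorm_le (h n hc)).trans hn

theorem scaleNorm_congr {g' : G} (h : ∀ n, g ∈ S n ↔ g' ∈ S n) :
    scaleNorm S g = scaleNorm S g' := by
  simp only [scaleNorm, h]

namespace IsNormalSymmetric

variable [Group G] {s t : Set G}

theorem union (hs : IsNormalSymmetric s) (ht : IsNormalSymmetric t) :
    IsNormalSymmetric (s ∪ t) :=
  ⟨fun x hx => hx.imp (hs.inv_mem x) (ht.inv_mem x),
    fun g x hx => hx.imp (hs.conj_mem g x) (ht.conj_mem g x)⟩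

theorem mul_mul_self (hs : IsNormalSymmetric s) : IsNormalSymmetric (s * s * s) := by
  constructor
  · rintro _ ⟨_, ⟨a, ha, b, hb, rfl⟩, c, hc, rfl⟩
    simpa [mul_assoc] using Set.mul_mem_mul (Set.mul_mem_mul (hs.inv_mem c hc) (hs.inv_mem b hb))
      (hs.inv_mem a ha)
  · rintro g _ ⟨_, ⟨a, ha, b, hb, rfl⟩, c, hc, rfl⟩
    simpa [mul_assoc] using Set.mul_mem_mul
      (Set.mul_mem_mul (hs.conj_mem g a ha) (hs.conj_mem g b hb)) (hs.conj_mem g c hc)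

end IsNormalSymmetric

theorem isNormalSymmetric_conjClosure [Group G] {A : Set G} (hA : ∀ x ∈ A, x⁻¹ ∈ A) :
    IsNormalSymmetric (ConjClosure A) :=
  ⟨fun _ ⟨a, ha, g, hx⟩ => ⟨a⁻¹, hA a ha, g, by rw [hx]; group⟩,
    fun g _ ⟨a, ha, h, hx⟩ => ⟨a, ha, g * h, by rw [hx]; group⟩⟩

namespace IsNormalScale

variable [Group G] (hS : IsNormalScale S)
include hS

theorem monotone : Monotone S :=
  monotone_int_of_le_succ fun n x hx => hS.mul_mul_subset n <| by
    simpa using Set.mul_mem_mul (Set.mul_mem_mul hx (hS.one_mem n)) (hS.one_mem n)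

theorem mem_of_scaleNorm_lt (h : scaleNorm S g < 2 ^ (n + 1)) : g ∈ S n := by
  obtain ⟨m, hm⟩ := hS.exists_mem g
  obtain ⟨_, ⟨k, hk, rfl⟩, hlt⟩ := exists_lt_of_csInf_lt (Set.Nonempty.image _ ⟨m, hm⟩) h
  rw [zpow_lt_zpow_iff_right₀ one_lt_two] at hlt
  exact hS.monotone (Int.lt_add_one_iff.1 hlt) hk

theorem scaleNorm_one : scaleNorm S 1 = 0 := by
  simpa using scaleNorm_le_two_mul (S := S) (c := 0) fun n _ => hS.one_mem n

theorem scaleNorm_inv (g : G) : scaleNorm S g⁻¹ = scaleNorm S g :=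
  scaleNorm_congr fun n =>
    ⟨fun h => by simpa using (hS.isNormalSymmetric n).inv_mem _ h,
      (hS.isNormalSymmetric n).inv_mem g⟩

theorem scaleNorm_conj (h g : G) : scaleNorm S (h * g * h⁻¹) = scaleNorm S g :=
  scaleNorm_congr fun n =>
    ⟨fun hg => by simpa [mul_assoc] using (hS.isNormalSymmetric n).conj_mem h⁻¹ _ hg,
      (hS.isNormalSymmetric n).conj_mem h g⟩

theorem scaleNorm_mul_mul_le (a b c : G) :
    scaleNorm S (a * b * c) ≤
      2 * max (scaleNorm S a) (max (scaleNorm S b) (scaleNorm S c)) := by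
  refine scaleNorm_le_two_mul fun n hn => ?_
  have hmem : ∀ x, scaleNorm S x ≤ max (scaleNorm S a) (max (scaleNorm S b) (scaleNorm S c)) →
      x ∈ S (n - 1) := fun x hx =>
    hS.mem_of_scaleNorm_lt <| by rw [sub_add_cancel]; exact hx.trans_lt hn
  simpa using hS.mul_mul_subset (n - 1) <| Set.mul_mem_mul
    (Set.mul_mem_mul (hmem a le_sup_left) (hmem b (le_sup_left.trans le_sup_right)))
    (hmem c (le_sup_right.trans le_sup_right))

noncomputable abbrev pseudoMetricSpace : PseudoMetricSpace G :=
  PseudoMetricSpace.ofPreNNDist (fun x y => scaleNorm S (x⁻¹ * y))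
    (fun x => by simp [hS.scaleNorm_one])
    (fun x y => by rw [← hS.scaleNorm_inv, mul_inv_rev, inv_inv])

noncomputable def scaleDist : G → G → ℝ :=
  @dist G hS.pseudoMetricSpace.toDist

theorem scaleDist_comm (x y : G) : hS.scaleDist x y = hS.scaleDist y x :=
  @dist_comm G hS.pseudoMetricSpace x y

theorem scaleDist_le (x y : G) : hS.scaleDist x y ≤ scaleNorm S (x⁻¹ * y) :=
  PseudoMetricSpace.dist_ofPreNNDist_le _ _ _ x y

theorem scaleNorm_le_two_mul_scaleDist (x y : G) :
    (scaleNorm S (x⁻¹ * y) : ℝ) ≤ 2 * hS.scaleDist x y :=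
  PseudoMetricSpace.le_two_mul_dist_ofPreNNDist _ _ _ (fun x₁ x₂ x₃ x₄ => by
    simpa [mul_assoc] using hS.scaleNorm_mul_mul_le (x₁⁻¹ * x₂) (x₂⁻¹ * x₃) (x₃⁻¹ * x₄)) x y

theorem scaleDist_mul_left (h g f : G) : hS.scaleDist (h * g) (h * f) = hS.scaleDist g f :=
  PseudoMetricSpace.dist_ofPreNNDist_equiv _ _ _ (Equiv.mulLeft h)
    (fun x y => by simp [mul_assoc]) g f

theorem scaleDist_mul_right (h g f : G) : hS.scaleDist (g * h) (f * h) = hS.scaleDist g f :=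
  PseudoMetricSpace.dist_ofPreNNDist_equiv _ _ _ (Equiv.mulRight h)
    (fun x y => by simpa [mul_assoc] using hS.scaleNorm_conj h⁻¹ (x⁻¹ * y)) g f

theorem scaleDist_one_le_of_mem (h : g ∈ S n) : hS.scaleDist 1 g ≤ 2 ^ n := by
  refine (hS.scaleDist_le 1 g).trans ?_
  exact_mod_cast scaleNorm_le (by simpa using h)

theorem mem_of_scaleDist_one_lt (h : hS.scaleDist 1 g < 2 ^ n) : g ∈ S n := by
  refine hS.mem_of_scaleNorm_lt ?_
  rw [← NNReal.coe_lt_coe, NNReal.coe_zpow, NNReal.coe_two, zpow_add_one₀ two_ne_zero]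
  have := hS.scaleNorm_le_two_mul_scaleDist 1 g
  rw [inv_one, one_mul] at this
  linarith

theorem isCompatibleLeftInvariantMetric [TopologicalSpace G] [IsTopologicalGroup G] [T1Space G]
    (hB : (𝓝 (1 : G)).HasBasis (fun _ => True) S) :
    IsCompatibleLeftInvariantMetric G hS.scaleDist := by
  have hxy : ∀ x y : G, hS.scaleDist 1 (x⁻¹ * y) = hS.scaleDist x y := fun x y => by
    rw [← hS.scaleDist_mul_left x, mul_one, mul_inv_cancel_left]
  refine ⟨⟨fun x y => ⟨fun h => ?_, fun h => h ▸ @dist_self G hS.pseudoMetricSpace x⟩,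
    hS.scaleDist_comm, @dist_triangle G hS.pseudoMetricSpace⟩,
    isCompatible_of_hasBasis hS.scaleDist_mul_left
      (hB.to_hasBasis (fun n _ => ?_) fun ε hε => ?_),
    hS.scaleDist_mul_left⟩
  · by_contra hne
    obtain ⟨n, -, hn⟩ := hB.mem_iff.1 (isOpen_compl_singleton.mem_nhds
      (show (1 : G) ≠ x⁻¹ * y by rwa [ne_eq, eq_inv_mul_iff_mul_eq, mul_one]))
    exact hn (hS.mem_of_scaleDist_one_lt (n := n) (by rw [hxy, h]; positivity)) rfl
  · exact ⟨2 ^ n, by positivity, fun g hg => hS.mem_of_scaleDist_one_lt hg⟩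
  · obtain ⟨n, hn, -⟩ := exists_mem_Ico_zpow hε one_lt_two
    exact ⟨n - 1, trivial, fun g hg => (hS.scaleDist_one_le_of_mem hg).trans_lt
      ((zpow_lt_zpow_right₀ one_lt_two (sub_one_lt n)).trans_le hn)⟩

theorem metricallyProperMetric [TopologicalSpace G] (hOB : ∀ n, HasRelPropOB G (S n)) :
    MetricallyProperMetric G hS.scaleDist := by
  rintro g ⟨ρ, hρ, hg⟩
  refine tendsto_atTop.2 fun b => ?_
  obtain ⟨n, hn⟩ := pow_unbounded_of_one_lt b one_lt_two
  obtain ⟨C, hC⟩ := hasRelPropOB_iff.1 (hOB n) ρ hρ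
  filter_upwards [hg.eventually_gt_atTop C] with k hk
  have hgk : g k ∉ S n := fun h => (hC _ h).not_gt hk
  calc b ≤ (2 : ℝ) ^ (n : ℤ) := by rw [zpow_natCast]; exact hn.le
    _ ≤ hS.scaleDist 1 (g k) := not_lt.1 (mt hS.mem_of_scaleDist_one_lt hgk)
    _ = hS.scaleDist (g k) 1 := hS.scaleDist_comm 1 (g k)

end IsNormalScale

end NormalScale

section Construction

variable {G : Type*}

def twoSidedSeq (V W : ℕ → Set G) : ℤ → Set G
  | (k : ℕ) => W k
  | Int.negSucc k => V (k + 1)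

variable {V W : ℕ → Set G}

theorem twoSidedSeq_neg (h : V 0 = W 0) (k : ℕ) : twoSidedSeq V W (-k) = V k := by
  cases k with
  | zero => exact h.symm
  | succ k => rfl

theorem forall_twoSidedSeq {p : Set G → Prop} (hV : ∀ k, p (V k)) (hW : ∀ k, p (W k)) (n : ℤ) :
    p (twoSidedSeq V W n) := by
  cases n with
  | ofNat k => exact hW k
  | negSucc k => exact hV (k + 1)

theorem Filter.HasAntitoneBasis.hasBasis_twoSidedSeq {l : Filter G} (hV : l.HasAntitoneBasis V)
    (h : V 0 = W 0) (hW : ∀ k, W k ∈ l) : l.HasBasis (fun _ => True) (twoSidedSeq V W) :=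
  ⟨fun t => ⟨fun ht => let ⟨k, hk⟩ := hV.mem_iff.1 ht; ⟨-k, trivial, by rwa [twoSidedSeq_neg h]⟩,
    fun ⟨n, _, hn⟩ => Filter.mem_of_superset (forall_twoSidedSeq (p := (· ∈ l)) hV.mem hW n) hn⟩⟩

theorem isNormalScale_twoSidedSeq [Group G] (h : V 0 = W 0)
    (hV : ∀ k, (1 : G) ∈ V k ∧ IsNormalSymmetric (V k))
    (hW : ∀ k, (1 : G) ∈ W k ∧ IsNormalSymmetric (W k))
    (hVcube : ∀ k, V (k + 1) * V (k + 1) * V (k + 1) ⊆ V k)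
    (hWcube : ∀ k, W k * W k * W k ⊆ W (k + 1)) (hW_exists : ∀ g, ∃ k, g ∈ W k) :
    IsNormalScale (twoSidedSeq V W) where
  one_mem := forall_twoSidedSeq (p := ((1 : G) ∈ ·)) (fun k => (hV k).1) fun k => (hW k).1
  isNormalSymmetric := forall_twoSidedSeq (p := IsNormalSymmetric) (fun k => (hV k).2)
    fun k => (hW k).2
  mul_mul_subset
    | (k : ℕ) => hWcube k
    | Int.negSucc k => by
      rw [show Int.negSucc k + 1 = -(k : ℤ) by omega, twoSidedSeq_neg h]
      exact hVcube k
  exists_mem g := let ⟨k, hk⟩ := hW_exists g; ⟨k, hk⟩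

variable [Group G]

theorem exists_normal_antitone_basis [TopologicalSpace G] [IsTopologicalGroup G]
    [FirstCountableTopology G]
    (hsin : ∀ U ∈ 𝓝 (1 : G), ∃ V ∈ 𝓝 (1 : G), V ⊆ U ∧ ∀ g : G, ∀ a ∈ V, g * a * g⁻¹ ∈ V)
    {U : Set G} (hU : U ∈ 𝓝 (1 : G)) :
    ∃ V : ℕ → Set G, (𝓝 (1 : G)).HasAntitoneBasis V ∧
      (∀ k, IsNormalSymmetric (V k) ∧ V k ⊆ U) ∧ ∀ k, V (k + 1) * V (k + 1) * V (k + 1) ⊆ V k := by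
  have hbasis : (𝓝 (1 : G)).HasBasis (fun s => s ∈ 𝓝 1 ∧ (IsNormalSymmetric s ∧ s ⊆ U)) id := by
    refine Filter.hasBasis_self.2 fun t ht => ?_
    obtain ⟨V, hV, hVsub, hVconj⟩ := hsin (t ∩ U) (Filter.inter_mem ht hU)
    refine ⟨V ∩ V⁻¹, Filter.inter_mem hV (inv_mem_nhds_one G hV),
      ⟨⟨fun x hx => ⟨hx.2, by simpa using hx.1⟩, fun g x hx => ⟨hVconj g x hx.1, ?_⟩⟩,
        fun x hx => (hVsub hx.1).2⟩, fun x hx => (hVsub hx.1).1⟩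
    simpa [Set.mem_inv, mul_assoc] using hVconj g x⁻¹ hx.2
  obtain ⟨x, hx, hxB⟩ := hbasis.exists_antitone_subbasis
  obtain ⟨φ, -, hφ, hφB⟩ := hxB.subbasis_with_rel (r := fun m n => x n * x n * x n ⊆ x m)
    fun m => by
      obtain ⟨M, hM, hMsub⟩ := exists_nhds_one_split4 (hx m).1
      filter_upwards [hxB.tendsto_smallSets.eventually (eventually_smallSets_subset.2 hM)]
        with n hn
      rintro _ ⟨_, ⟨a, ha, b, hb, rfl⟩, c, hc, rfl⟩
      simpa using hMsub (hn ha) (hn hb) (hn hc) (mem_of_mem_nhds hM)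
  exact ⟨x ∘ φ, hφB, fun k => (hx (φ k)).2, fun k => hφ (Nat.lt_succ_self k)⟩

def cubeConjSeq (W₀ : Set G) (a : ℕ → G) : ℕ → Set G
  | 0 => W₀
  | k + 1 => cubeConjSeq W₀ a k * cubeConjSeq W₀ a k * cubeConjSeq W₀ a k ∪
      ConjClosure {a k, (a k)⁻¹}

namespace cubeConjSeq

variable {W₀ : Set G} {a : ℕ → G}

theorem mul_mul_subset (k : ℕ) :
    cubeConjSeq W₀ a k * cubeConjSeq W₀ a k * cubeConjSeq W₀ a k ⊆ cubeConjSeq W₀ a (k + 1) :=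
  Set.subset_union_left

theorem apply_mem (k : ℕ) : a k ∈ cubeConjSeq W₀ a (k + 1) :=
  Or.inr ⟨a k, Or.inl rfl, 1, by group⟩

theorem one_mem (h₀ : (1 : G) ∈ W₀) (k : ℕ) : (1 : G) ∈ cubeConjSeq W₀ a k := by
  induction k with
  | zero => exact h₀
  | succ k ih => exact mul_mul_subset k (by simpa using Set.mul_mem_mul (Set.mul_mem_mul ih ih) ih)

theorem monotone (h₀ : (1 : G) ∈ W₀) : Monotone (cubeConjSeq W₀ a) :=
  monotone_nat_of_le_succ fun k x hx => mul_mul_subset k <| by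
    simpa using Set.mul_mem_mul (Set.mul_mem_mul hx (one_mem h₀ k)) (one_mem h₀ k)

theorem isNormalSymmetric (h₀ : IsNormalSymmetric W₀) (k : ℕ) :
    IsNormalSymmetric (cubeConjSeq W₀ a k) := by
  induction k with
  | zero => exact h₀
  | succ k ih =>
    refine ih.mul_mul_self.union (isNormalSymmetric_conjClosure ?_)
    rintro x (rfl | rfl)
    · exact Or.inr rfl
    · exact Or.inl (inv_inv _)

theorem hasRelPropOB [TopologicalSpace G] (h₀ : HasRelPropOB G W₀)
    (hconj : ∀ A : Set G, HasRelPropOB G A → HasRelPropOB G (ConjClosure A)) (k : ℕ) :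
    HasRelPropOB G (cubeConjSeq W₀ a k) := by
  induction k with
  | zero => exact h₀
  | succ k ih => exact (ih.mul ih |>.mul ih).union (hconj _ (Set.toFinite _).hasRelPropOB)

theorem exists_mem [TopologicalSpace G] [IsTopologicalGroup G] (ha : DenseRange a)
    (hW₀ : W₀ ∈ 𝓝 (1 : G)) (h₀ : IsNormalSymmetric W₀) (g : G) :
    ∃ k, g ∈ cubeConjSeq W₀ a k := by
  obtain ⟨k, hk⟩ := ha.mem_nhds ((continuous_const_mul g⁻¹).continuousAt.preimage_mem_nhds
    (show W₀ ∈ 𝓝 (g⁻¹ * g) by rwa [inv_mul_cancel]))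
  have h1 := one_mem (a := a) (mem_of_mem_nhds hW₀) (k + 1)
  have hv : (g⁻¹ * a k)⁻¹ ∈ cubeConjSeq W₀ a (k + 1) :=
    monotone (mem_of_mem_nhds hW₀) (Nat.zero_le _) (h₀.inv_mem _ hk)
  refine ⟨k + 2, mul_mul_subset (k + 1) ?_⟩
  simpa using Set.mul_mem_mul (Set.mul_mem_mul (apply_mem (W₀ := W₀) (a := a) k) hv) h1

end cubeConjSeq

theorem exists_isNormalScale [TopologicalSpace G] [IsTopologicalGroup G]
    [FirstCountableTopology G] [TopologicalSpace.SeparableSpace G]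
    (hsin : ∀ U ∈ 𝓝 (1 : G), ∃ V ∈ 𝓝 (1 : G), V ⊆ U ∧ ∀ g : G, ∀ a ∈ V, g * a * g⁻¹ ∈ V)
    {U : Set G} (hU : U ∈ 𝓝 (1 : G)) (hUOB : HasRelPropOB G U)
    (hconj : ∀ A : Set G, HasRelPropOB G A → HasRelPropOB G (ConjClosure A)) :
    ∃ S : ℤ → Set G, IsNormalScale S ∧ (𝓝 (1 : G)).HasBasis (fun _ => True) S ∧
      ∀ n, HasRelPropOB G (S n) := by
  obtain ⟨V, hVB, hV, hVcube⟩ := exists_normal_antitone_basis hsin hU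
  obtain ⟨a, ha⟩ := TopologicalSpace.exists_dense_seq G
  have hV1 : ∀ k, (1 : G) ∈ V k := fun k => mem_of_mem_nhds (hVB.mem k)
  let W := cubeConjSeq (V 0) a
  refine ⟨twoSidedSeq V W, isNormalScale_twoSidedSeq rfl (fun k => ⟨hV1 k, (hV k).1⟩)
      (fun k => ⟨cubeConjSeq.one_mem (hV1 0) k, cubeConjSeq.isNormalSymmetric (hV 0).1 k⟩)
      hVcube cubeConjSeq.mul_mul_subset (cubeConjSeq.exists_mem ha (hVB.mem 0) (hV 0).1),
    hVB.hasBasis_twoSidedSeq rfl fun k => ?_,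
    forall_twoSidedSeq (p := HasRelPropOB G) (fun k => hUOB.mono (hV k).2)
      (cubeConjSeq.hasRelPropOB (hUOB.mono (hV 0).2) hconj)⟩
  exact Filter.mem_of_superset (hVB.mem 0) (cubeConjSeq.monotone (hV1 0) (Nat.zero_le k))

end Construction

theorem exists_metrically_proper_biinvariant_metric_iff {G : Type*} [Group G]
    [TopologicalSpace G] [IsTopologicalGroup G] [TopologicalSpace.MetrizableSpace G]
    [TopologicalSpace.SeparableSpace G] :
    (∃ d : G → G → ℝ, IsCompatibleLeftInvariantMetric G d ∧
        (∀ h g f : G, d (g * h) (f * h) = d g f) ∧ MetricallyProperMetric G d) ↔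
      ((∀ U ∈ nhds (1 : G), ∃ V ∈ nhds (1 : G), V ⊆ U ∧ ∀ g : G, ∀ a ∈ V, g * a * g⁻¹ ∈ V) ∧
        (∃ U ∈ nhds (1 : G), HasRelPropOB G U) ∧
        (∀ A : Set G, HasRelPropOB G A → HasRelPropOB G (ConjClosure A))) := by
  constructor
  · rintro ⟨d, hd, hright, hproper⟩
    have hball : ∀ g ∈ {g | d 1 g < 1}, d g 1 ≤ 1 := fun g hg => by
      rw [hd.dist_comm]
      exact le_of_lt hg
    exact ⟨fun U hU => hd.exists_conj_invariant_nhds_subset hright hU,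
      ⟨_, (hd.2.1 1 _).2 ⟨1, one_pos, subset_rfl⟩, hproper.hasRelPropOB hball⟩,
      fun A hA => hd.hasRelPropOB_conjClosure hright hproper hA⟩
  · rintro ⟨hsin, ⟨U, hU, hUOB⟩, hconj⟩
    obtain ⟨S, hS, hB, hOB⟩ := exists_isNormalScale hsin hU hUOB hconj
    exact ⟨hS.scaleDist, hS.isCompatibleLeftInvariantMetric hB, hS.scaleDist_mul_right,
      hS.metricallyProperMetric hOB⟩
end
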